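/- Let F : ℝ^n → ℝ^m be continuously differentiable, B a symmetric positive definite n×n real matrix, ℓ > 0, and α ∈ ℝ^m with α_i > 0 for all i. Define w_ℓ^α(x) = sup_{y∈ℝ^n} min_{i∈{1,…,m}} [ ⟨∇F_i(x), x−y⟩/α_i − (ℓ/2)‖x−y‖_B² ]. Then w_ℓ^α(x) ≥ 0, and x is Pareto critical for F if and only if w_ℓ^α(x) = 0. -/

import Mathlib

/-!
Taking `y = x` shows `w ≥ 0`. If the objective is positive at some `y`, then every
`⟪∇F_i(x), x - y⟫` is positive, so `y - x` is a common descent direction. Conversely, along a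
common descent direction `d` the objective at `x + t • d` is at least
`t * (min_i (-⟪∇F_i(x), d⟫ / α_i) - (ℓ/2) ‖d‖_B² t)`, positive for small `t > 0`.
Coercivity of `B` keeps the supremum finite, so that `w` is a genuine supremum and not the junk
value `0` of an unbounded `⨆`.
-/

open scoped RealInnerProductSpace

/-- Minimum of a function over the (nonempty) finite index type `Fin m`. -/
noncomputable def fmin {m : ℕ} [NeZero m] (f : Fin m → ℝ) : ℝ :=
  Finset.univ.inf' Finset.univ_nonempty f

/-- A point `x` is Pareto critical for `F` if there is no direction `d` with
`⟨∇F_i(x), d⟩ < 0` for all `i`. -/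
def ParetoCritical {n m : ℕ} (F : Fin m → EuclideanSpace ℝ (Fin n) → ℝ)
    (x : EuclideanSpace ℝ (Fin n)) : Prop :=
  ¬∃ d : EuclideanSpace ℝ (Fin n), ∀ i, ⟪gradient (F i) x, d⟫ < 0

section Coercivity

variable {E : Type*} [NormedAddCommGroup E] [InnerProductSpace ℝ E]

lemma inner_smul_map_smul_self (B : E →ₗ[ℝ] E) (t : ℝ) (u : E) :
    ⟪t • u, B (t • u)⟫ = t ^ 2 * ⟪u, B u⟫ := by
  rw [map_smul, real_inner_smul_left, real_inner_smul_right]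
  ring

lemma exists_pos_mul_norm_sq_le_inner_map_self [FiniteDimensional ℝ E] (B : E →ₗ[ℝ] E)
    (hB : ∀ u, u ≠ 0 → 0 < ⟪u, B u⟫) : ∃ c > 0, ∀ u, c * ‖u‖ ^ 2 ≤ ⟪u, B u⟫ := by
  rcases subsingleton_or_nontrivial E with hE | hE
  · exact ⟨1, one_pos, fun u => by simp [Subsingleton.elim u 0]⟩
  have hcont : Continuous fun u : E => ⟪u, B u⟫ :=
    continuous_id.inner B.continuous_of_finiteDimensional
  obtain ⟨u₀, hu₀, hmin⟩ := (isCompact_sphere (0 : E) 1).exists_isMinOn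
    (NormedSpace.sphere_nonempty.2 zero_le_one) hcont.continuousOn
  refine ⟨⟪u₀, B u₀⟫, hB u₀ (ne_zero_of_mem_unit_sphere ⟨u₀, hu₀⟩), fun u => ?_⟩
  rcases eq_or_ne u 0 with rfl | hu
  · simp
  have hnorm : 0 < ‖u‖ := norm_pos_iff.2 hu
  have hunit : ‖u‖⁻¹ • u ∈ Metric.sphere (0 : E) 1 := by
    rw [mem_sphere_zero_iff_norm, norm_smul, norm_inv, norm_norm, inv_mul_cancel₀ hnorm.ne']
  have hle : ⟪u₀, B u₀⟫ ≤ ‖u‖⁻¹ ^ 2 * ⟪u, B u⟫ := by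
    simpa only [Set.mem_ofPred_eq, inner_smul_map_smul_self] using hmin hunit
  calc ⟪u₀, B u₀⟫ * ‖u‖ ^ 2 ≤ ‖u‖⁻¹ ^ 2 * ⟪u, B u⟫ * ‖u‖ ^ 2 := by gcongr
    _ = ⟪u, B u⟫ := by field_simp

end Coercivity

section Fmin

variable {m : ℕ} [NeZero m]

lemma fmin_le (f : Fin m → ℝ) (i : Fin m) : fmin f ≤ f i :=
  Finset.inf'_le _ (Finset.mem_univ i)

lemma lt_fmin_iff {f : Fin m → ℝ} {a : ℝ} : a < fmin f ↔ ∀ i, a < f i := by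
  simp [fmin, Finset.lt_inf'_iff]

lemma fmin_const (a : ℝ) : fmin (fun _ : Fin m => a) = a :=
  Finset.inf'_const _ _

end Fmin

section Merit

variable {E : Type*} [NormedAddCommGroup E] [InnerProductSpace ℝ E] {m : ℕ} [NeZero m]

/-- The function of `y` whose supremum is the merit function `w_ℓ^α(x)`; here `g i` plays the
role of `∇F_i(x)`. -/
noncomputable def meritObjective (g : Fin m → E) (B : E →ₗ[ℝ] E) (ℓ : ℝ) (α : Fin m → ℝ)
    (x y : E) : ℝ :=
  fmin fun i => ⟪g i, x - y⟫ / α i - ℓ / 2 * ⟪x - y, B (x - y)⟫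

variable (g : Fin m → E) (B : E →ₗ[ℝ] E) (ℓ : ℝ) (α : Fin m → ℝ) (x : E)

lemma meritObjective_self : meritObjective g B ℓ α x x = 0 := by
  simp [meritObjective, fmin_const]

lemma exists_meritObjective_pos {d : E} (hd : ∀ i, ⟪g i, d⟫ < 0) (hα : ∀ i, 0 < α i) :
    ∃ y, 0 < meritObjective g B ℓ α x y := by
  set c := fmin fun i => -⟪g i, d⟫ / α i
  have hc : 0 < c := lt_fmin_iff.2 fun i => div_pos (neg_pos.2 (hd i)) (hα i)
  obtain ⟨t, ht, htc⟩ := exists_pos_mul_lt hc (ℓ / 2 * ⟪d, B d⟫)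
  refine ⟨x + t • d, lt_fmin_iff.2 fun i => ?_⟩
  have hx : x - (x + t • d) = (-t) • d := by rw [sub_add_cancel_left, neg_smul]
  have hci : c ≤ -⟪g i, d⟫ / α i := fmin_le _ i
  have hterm : ⟪g i, (-t) • d⟫ / α i - ℓ / 2 * ⟪(-t) • d, B ((-t) • d)⟫
      = t * (-⟪g i, d⟫ / α i - ℓ / 2 * ⟪d, B d⟫ * t) := by
    rw [inner_smul_map_smul_self, real_inner_smul_right]
    ring
  rw [hx, hterm]
  exact mul_pos ht (by linarith)

lemma inner_neg_of_meritObjective_pos {y : E} (hy : 0 < meritObjective g B ℓ α x y)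
    (hB : ∀ u, 0 ≤ ⟪u, B u⟫) (hℓ : 0 ≤ ℓ) (hα : ∀ i, 0 < α i) (i : Fin m) :
    ⟪g i, y - x⟫ < 0 := by
  have hi := lt_fmin_iff.1 hy i
  have hq : 0 ≤ ℓ / 2 * ⟪x - y, B (x - y)⟫ := mul_nonneg (by positivity) (hB _)
  have : 0 < ⟪g i, x - y⟫ := (div_pos_iff_of_pos_right (hα i)).1 (by linarith)
  rwa [← neg_sub, inner_neg_right, neg_neg_iff_pos]

/-- Coercivity of `B` makes the objective a concave quadratic in `‖x - y‖`, bounded by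
`a² / (4b)` with `a = ‖g 0‖ / α 0`, `b = ℓ c / 2` and `c` the coercivity constant of `B`. -/
lemma bddAbove_range_meritObjective [FiniteDimensional ℝ E]
    (hB : ∀ u, u ≠ 0 → 0 < ⟪u, B u⟫) (hℓ : 0 < ℓ) (hα : ∀ i, 0 < α i) :
    BddAbove (Set.range (meritObjective g B ℓ α x)) := by
  obtain ⟨c, hc, hcB⟩ := exists_pos_mul_norm_sq_le_inner_map_self B hB
  set a := ‖g 0‖ / α 0
  set b := ℓ / 2 * c
  have hb : 0 < b := by positivity
  refine ⟨a ^ 2 / (4 * b), Set.forall_mem_range.2 fun y => ?_⟩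
  set r := ‖x - y‖
  have hlin : ⟪g 0, x - y⟫ / α 0 ≤ a * r := by
    rw [div_mul_eq_mul_div]
    exact div_le_div_of_nonneg_right (real_inner_le_norm _ _) (hα 0).le
  have hquad : b * r ^ 2 ≤ ℓ / 2 * ⟪x - y, B (x - y)⟫ := by
    rw [mul_assoc]
    exact mul_le_mul_of_nonneg_left (hcB _) (by positivity)
  calc meritObjective g B ℓ α x y ≤ ⟪g 0, x - y⟫ / α 0 - ℓ / 2 * ⟪x - y, B (x - y)⟫ :=
        fmin_le _ 0
    _ ≤ a * r - b * r ^ 2 := by linarith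
    _ ≤ a ^ 2 / (4 * b) := by
        rw [le_div_iff₀ (by positivity)]
        nlinarith [sq_nonneg (2 * b * r - a)]

end Merit

theorem stmt14_general {n m : ℕ} [NeZero m] (F : Fin m → EuclideanSpace ℝ (Fin n) → ℝ)
    (B : EuclideanSpace ℝ (Fin n) →ₗ[ℝ] EuclideanSpace ℝ (Fin n))
    (hposdef : ∀ u : EuclideanSpace ℝ (Fin n), u ≠ 0 → 0 < ⟪u, B u⟫)
    (ℓ : ℝ) (hℓ : 0 < ℓ) (α : Fin m → ℝ) (hα : ∀ i, 0 < α i)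
    (x : EuclideanSpace ℝ (Fin n)) (w : ℝ)
    (hw : w = ⨆ y : EuclideanSpace ℝ (Fin n),
      fmin fun i => ⟪gradient (F i) x, x - y⟫ / α i - ℓ / 2 * ⟪x - y, B (x - y)⟫) :
    0 ≤ w ∧ (ParetoCritical F x ↔ w = 0) := by
  set g := fun i => gradient (F i) x
  change w = ⨆ y, meritObjective g B ℓ α x y at hw
  have hB : ∀ u, 0 ≤ ⟪u, B u⟫ := fun u => by
    rcases eq_or_ne u 0 with rfl | hu
    · simp
    · exact (hposdef u hu).le
  have hbdd := bddAbove_range_meritObjective g B ℓ α x hposdef hℓ hα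
  have hle : ∀ y, meritObjective g B ℓ α x y ≤ w := fun y => hw ▸ le_ciSup hbdd y
  have hw₀ : 0 ≤ w := meritObjective_self g B ℓ α x ▸ hle x
  refine ⟨hw₀, fun hP => le_antisymm ?_ hw₀, fun hzero ⟨d, hd⟩ => ?_⟩
  · rw [hw]
    refine ciSup_le fun y => not_lt.1 fun hy => hP ⟨y - x, ?_⟩
    exact inner_neg_of_meritObjective_pos g B ℓ α x hy hB hℓ.le hα
  · obtain ⟨y, hy⟩ := exists_meritObjective_pos g B ℓ α x hd hα
    exact (hy.trans_le (hle y)).ne' hzero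

/-- The merit function
`w_ℓ^α(x) = sup_y min_i [⟨∇F_i(x), x−y⟩/α_i − (ℓ/2)‖x−y‖_B²]` is nonnegative, and it
vanishes at `x` if and only if `x` is Pareto critical. -/
theorem stmt14 {n m : ℕ} [NeZero m] (F : Fin m → EuclideanSpace ℝ (Fin n) → ℝ)
    (hF : ∀ i, ContDiff ℝ 1 (F i))
    (B : EuclideanSpace ℝ (Fin n) →ₗ[ℝ] EuclideanSpace ℝ (Fin n))
    (hsym : ∀ u v : EuclideanSpace ℝ (Fin n), ⟪B u, v⟫ = ⟪u, B v⟫)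
    (hposdef : ∀ u : EuclideanSpace ℝ (Fin n), u ≠ 0 → 0 < ⟪u, B u⟫)
    (ℓ : ℝ) (hℓ : 0 < ℓ) (α : Fin m → ℝ) (hα : ∀ i, 0 < α i)
    (x : EuclideanSpace ℝ (Fin n)) (w : ℝ)
    (hw : w = ⨆ y : EuclideanSpace ℝ (Fin n),
      fmin fun i => ⟪gradient (F i) x, x - y⟫ / α i - ℓ / 2 * ⟪x - y, B (x - y)⟫) :
    0 ≤ w ∧ (ParetoCritical F x ↔ w = 0) :=
  stmt14_general F B hposdef ℓ hℓ α hα x w hw
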